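/- arXiv:2401.05645 — 2 statements merged into one kernel-verified Lean document; each statement's English description precedes it below -/
import Mathlib

section
/- Let B be the one-point extension of A by an A-module M. If T_A is an ICE-closed subcategory of mod A, then the full subcategory T_B of mod B consisting of all triples (N, V, f) with N ∈ T_A, together with all triples (0, V, 0), is an ICE-closed subcategory of mod B. -/
open CategoryTheory Limits TensorProduct

section OnePointExtension

variable (k : Type) [Field k] (A : Type) [Ring A] [Algebra k A]
  (M : Type) [AddCommGroup M] [Module k M] [Module A M] [IsScalarTower k A M]

/-- The underlying set of the one-point extension `B = [[A,0],[M,k]]` of `A`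
by the (`A`,`k`)-bimodule `M`: triples `(a, m, c)`. -/
abbrev OPE := A × M × k

/-- The triangular matrix ring structure on `B = [[A,0],[M,k]]`. -/
instance : Ring (OPE k A M) where
  __ := (inferInstance : AddCommGroup (A × M × k))
  mul x y := (x.1 * y.1, x.1 • y.2.1 + y.2.2 • x.2.1, x.2.2 * y.2.2)
  one := (1, 0, 1)
  mul_assoc x y z := by
    refine Prod.ext (mul_assoc _ _ _) (Prod.ext ?_ (mul_assoc _ _ _))
    show (x.1 * y.1) • z.2.1 + z.2.2 • (x.1 • y.2.1 + y.2.2 • x.2.1)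
        = x.1 • (y.1 • z.2.1 + z.2.2 • y.2.1) + (y.2.2 * z.2.2) • x.2.1
    rw [mul_smul, smul_add, smul_add, smul_comm z.2.2 x.1, mul_comm y.2.2 z.2.2, mul_smul]
    abel
  one_mul x := by
    refine Prod.ext (one_mul _) (Prod.ext ?_ (one_mul _))
    show (1 : A) • x.2.1 + x.2.2 • (0 : M) = x.2.1
    simp
  mul_one x := by
    refine Prod.ext (mul_one _) (Prod.ext ?_ (mul_one _))
    show x.1 • (0 : M) + (1 : k) • x.2.1 = x.2.1
    simp
  left_distrib x y z := by
    refine Prod.ext (left_distrib _ _ _) (Prod.ext ?_ (left_distrib _ _ _))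
    show x.1 • (y.2.1 + z.2.1) + (y.2.2 + z.2.2) • x.2.1
        = (x.1 • y.2.1 + y.2.2 • x.2.1) + (x.1 • z.2.1 + z.2.2 • x.2.1)
    rw [smul_add, add_smul]; abel
  right_distrib x y z := by
    refine Prod.ext (right_distrib _ _ _) (Prod.ext ?_ (right_distrib _ _ _))
    show (x.1 + y.1) • z.2.1 + z.2.2 • (x.2.1 + y.2.1)
        = (x.1 • z.2.1 + z.2.2 • x.2.1) + (y.1 • z.2.1 + z.2.2 • y.2.1)
    rw [add_smul, smul_add]; abel
  zero_mul x := by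
    refine Prod.ext (zero_mul _) (Prod.ext ?_ (zero_mul _))
    show (0 : A) • x.2.1 + x.2.2 • (0 : M) = 0
    simp
  mul_zero x := by
    refine Prod.ext (mul_zero _) (Prod.ext ?_ (mul_zero _))
    show x.1 • (0 : M) + (0 : k) • x.2.1 = 0
    simp

/-- The canonical projection `B → A`, a ring homomorphism. -/
def OPE.toA : OPE k A M →+* A where
  toFun x := x.1
  map_one' := rfl
  map_mul' _ _ := rfl
  map_zero' := rfl
  map_add' _ _ := rfl

/-- The canonical projection `B → k`, a ring homomorphism. -/
def OPE.tok : OPE k A M →+* k where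
  toFun x := x.2.2
  map_one' := rfl
  map_mul' _ _ := rfl
  map_zero' := rfl
  map_add' _ _ := rfl

/-- The embedding `mod A → mod B`, `N ↦ (N, 0, 0)`. -/
noncomputable def OPE.F : ModuleCat A ⥤ ModuleCat (OPE k A M) :=
  ModuleCat.restrictScalars (OPE.toA k A M)

/-- The embedding of `k`-vector spaces into `mod B`, `V ↦ (0, V, 0)`. -/
noncomputable def OPE.G : ModuleCat k ⥤ ModuleCat (OPE k A M) :=
  ModuleCat.restrictScalars (OPE.tok k A M)

/-- The `B`-module structure on `N × V` associated to a triple `(N, V, f)` with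
`f : M ⊗_k V → N` an `A`-linear map: `(a,m,c) • (n,v) = (a • n + f (m ⊗ v), c • v)`. -/
noncomputable def OPE.tripModule (N : Type) [AddCommGroup N] [Module A N]
    (V : Type) [AddCommGroup V] [Module k V] (f : M ⊗[k] V →ₗ[A] N) :
    Module (OPE k A M) (N × V) where
  smul b x := (b.1 • x.1 + f (b.2.1 ⊗ₜ[k] x.2), b.2.2 • x.2)
  one_smul x := by
    refine Prod.ext ?_ (one_smul _ _)
    show (1 : A) • x.1 + f ((0 : M) ⊗ₜ[k] x.2) = x.1
    simp
  mul_smul b b' x := by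
    refine Prod.ext ?_ (mul_smul _ _ _)
    show (b.1 * b'.1) • x.1 + f ((b.1 • b'.2.1 + b'.2.2 • b.2.1) ⊗ₜ[k] x.2)
        = b.1 • (b'.1 • x.1 + f (b'.2.1 ⊗ₜ[k] x.2)) + f (b.2.1 ⊗ₜ[k] (b'.2.2 • x.2))
    rw [add_tmul, map_add, ← smul_tmul', map_smul, smul_tmul, mul_smul, smul_add]; abel
  smul_zero b := by
    refine Prod.ext ?_ (smul_zero _)
    show b.1 • (0 : N) + f (b.2.1 ⊗ₜ[k] (0 : V)) = 0
    simp
  smul_add b x y := by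
    refine Prod.ext ?_ (smul_add _ _ _)
    show b.1 • (x.1 + y.1) + f (b.2.1 ⊗ₜ[k] (x.2 + y.2))
        = (b.1 • x.1 + f (b.2.1 ⊗ₜ[k] x.2)) + (b.1 • y.1 + f (b.2.1 ⊗ₜ[k] y.2))
    rw [tmul_add, map_add, smul_add]; abel
  add_smul b b' x := by
    refine Prod.ext ?_ (add_smul _ _ _)
    show (b.1 + b'.1) • x.1 + f ((b.2.1 + b'.2.1) ⊗ₜ[k] x.2)
        = (b.1 • x.1 + f (b.2.1 ⊗ₜ[k] x.2)) + (b'.1 • x.1 + f (b'.2.1 ⊗ₜ[k] x.2))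
    rw [add_tmul, map_add, add_smul]; abel
  zero_smul x := by
    refine Prod.ext ?_ (zero_smul _ _)
    show (0 : A) • x.1 + f ((0 : M) ⊗ₜ[k] x.2) = 0
    simp

/-- The `B`-module corresponding to the triple `(N, V, f)`. -/
noncomputable def OPE.Trip (N : ModuleCat A) (V : ModuleCat k) (f : M ⊗[k] V →ₗ[A] N) :
    ModuleCat (OPE k A M) :=
  letI := OPE.tripModule k A M N V f
  ModuleCat.of (OPE k A M) (N × V)

end OnePointExtension
open CategoryTheory Limits

section Defs
variable {C : Type*} [Category C] [Abelian C]

/-- `T` is closed under isomorphisms. -/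
def IsoClosed (T : Set C) : Prop := ∀ ⦃X Y : C⦄, (X ≅ Y) → X ∈ T → Y ∈ T

/-- `T` is closed under images of morphisms between its objects. -/
def ClosedUnderImages (T : Set C) : Prop :=
  ∀ ⦃X Y : C⦄, X ∈ T → Y ∈ T → ∀ f : X ⟶ Y, image f ∈ T

/-- `T` is closed under cokernels of morphisms between its objects. -/
def ClosedUnderCokernels (T : Set C) : Prop :=
  ∀ ⦃X Y : C⦄, X ∈ T → Y ∈ T → ∀ f : X ⟶ Y, cokernel f ∈ T

/-- `T` is closed under kernels of morphisms between its objects. -/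
def ClosedUnderKernels (T : Set C) : Prop :=
  ∀ ⦃X Y : C⦄, X ∈ T → Y ∈ T → ∀ f : X ⟶ Y, kernel f ∈ T

/-- `T` is closed under extensions. -/
def ClosedUnderExtensions (T : Set C) : Prop :=
  ∀ (S : ShortComplex C), S.ShortExact → S.X₁ ∈ T → S.X₃ ∈ T → S.X₂ ∈ T

/-- `T` is closed under quotients (images of epimorphisms). -/
def ClosedUnderQuotients (T : Set C) : Prop :=
  ∀ ⦃X Y : C⦄, ∀ f : X ⟶ Y, Epi f → X ∈ T → Y ∈ T

/-- An ICE-closed subcategory: closed under images, cokernels and extensions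
(and isomorphisms, being a subcategory). -/
def IsICEClosed (T : Set C) : Prop :=
  IsoClosed T ∧ ClosedUnderImages T ∧ ClosedUnderCokernels T ∧ ClosedUnderExtensions T

/-- A torsion class: closed under quotients and extensions. -/
def IsTorsionClass (T : Set C) : Prop :=
  IsoClosed T ∧ ClosedUnderQuotients T ∧ ClosedUnderExtensions T

/-- A wide subcategory: closed under kernels, cokernels and extensions. -/
def IsWideSubcategory (T : Set C) : Prop :=
  IsoClosed T ∧ ClosedUnderKernels T ∧ ClosedUnderCokernels T ∧ ClosedUnderExtensions T

end Defs


/-!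
For an idempotent `e = φ 1` of a ring `S`, the corner `X ↦ e X` is an exact functor from
`S`-modules to `R`-modules, and the preimage of an ICE-closed subcategory under an exact functor
is ICE-closed. For `B = [[A,0],[M,k]]` and `e = (1,0,0)`, every `B`-module is the triple
`(e X, (1 - e) X, m ⊗ v ↦ (0,m,0) • v)`, so `T_B` is exactly the preimage under `X ↦ e X` of
`T_A ∪ {0}`, which is ICE-closed because `T_A` is.
-/

section ICEClosed

variable {C : Type*} [Category C] [Abelian C]

theorem IsICEClosed.union_isZero {T : Set C} (hT : IsICEClosed T) :
    IsICEClosed (T ∪ {X | IsZero X}) := by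
  obtain ⟨hiso, himage, hcoker, hext⟩ := hT
  refine ⟨?_, ?_, ?_, ?_⟩
  · rintro X Y e (hX | hX)
    exacts [Or.inl (hiso e hX), Or.inr (hX.of_iso e.symm)]
  · rintro X Y (hX | hX) hY f
    · rcases hY with hY | hY
      exacts [Or.inl (himage hX hY f), Or.inr (hY.of_mono (image.ι f))]
    · exact Or.inr (hX.of_epi (factorThruImage f))
  · rintro X Y hX (hY | hY) f
    · rcases hX with hX | hX
      · exact Or.inl (hcoker hX hY f)
      · obtain rfl : f = 0 := hX.eq_of_src _ _
        exact Or.inl (hiso cokernelZeroIsoTarget.symm hY)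
    · exact Or.inr (hY.of_epi (cokernel.π f))
  · rintro S hS (h₁ | h₁) (h₃ | h₃)
    · exact Or.inl (hext S hS h₁ h₃)
    · have := hS.isIso_f_iff.2 h₃
      exact Or.inl (hiso (asIso S.f) h₁)
    · have := hS.isIso_g_iff.2 h₁
      exact Or.inl (hiso (asIso S.g).symm h₃)
    · have := hS.isIso_f_iff.2 h₃
      exact Or.inr (h₁.of_iso (asIso S.f).symm)

theorem IsICEClosed.preimage_of_map_exact {D : Type*} [Category D] [Abelian D] {T : Set D}
    (hT : IsICEClosed T) (L : C ⥤ D) [L.PreservesZeroMorphisms]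
    (hL : ∀ S : ShortComplex C, S.Exact → (S.map L).Exact) :
    IsICEClosed (L.obj ⁻¹' T) := by
  have := L.preservesEpimorphisms_of_map_exact hL
  have := L.preservesMonomorphisms_of_map_exact hL
  have := L.preservesHomology_of_map_exact hL
  obtain ⟨hiso, himage, hcoker, hext⟩ := hT
  refine ⟨fun X Y e hX => hiso (L.mapIso e) hX, fun X Y hX hY f => ?_, fun X Y hX hY f => ?_,
    fun S hS h₁ h₃ => ?_⟩
  · have := strongEpi_of_epi (L.map (factorThruImage f))
    exact hiso (image.isoStrongEpiMono (L.map (factorThruImage f)) (L.map (image.ι f))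
      (by rw [← L.map_comp, image.fac])).symm (himage hX hY (L.map f))
  · have := Functor.PreservesHomology.preservesCokernel L f
    exact hiso (PreservesCokernel.iso L f).symm (hcoker hX hY (L.map f))
  · have := hS.mono_f
    have := hS.epi_g
    exact hext (S.map L) (hS.map L) h₁ h₃

end ICEClosed

namespace NonUnitalRingHom

universe u v w

variable {R : Type u} {S : Type v} [Ring R] [Ring S] (φ : R →ₙ+* S)

section Corner

variable (X : Type w) [AddCommGroup X] [Module S X]

/-- The corner `e X` at the idempotent `e = φ 1`; `R` acts on it through `φ`. -/
def corner : AddSubgroup X where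
  carrier := {x | φ 1 • x = x}
  add_mem' hx hy := by simp_all [smul_add]
  zero_mem' := smul_zero _
  neg_mem' hx := by simp_all [smul_neg]

variable {φ X}

theorem mem_corner {x : X} : x ∈ φ.corner X ↔ φ 1 • x = x := Iff.rfl

variable (φ) in
theorem smul_mem_corner (r : R) (x : X) : φ r • x ∈ φ.corner X := by
  rw [mem_corner, ← mul_smul, ← map_mul, one_mul]

instance : Module R (φ.corner X) where
  smul r x := ⟨φ r • (x : X), φ.smul_mem_corner r (x : X)⟩
  one_smul x := Subtype.ext x.2
  mul_smul r s x := Subtype.ext (by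
    show φ (r * s) • (x : X) = φ r • φ s • (x : X)
    rw [map_mul, mul_smul])
  smul_zero r := Subtype.ext (smul_zero _)
  smul_add r x y := Subtype.ext (smul_add _ _ _)
  add_smul r s x := Subtype.ext (by
    show φ (r + s) • (x : X) = φ r • (x : X) + φ s • (x : X)
    rw [map_add, add_smul])
  zero_smul x := Subtype.ext (by
    show φ 0 • (x : X) = 0
    rw [map_zero, zero_smul])

variable {Y : Type w} [AddCommGroup Y] [Module S Y]

def cornerMap (f : X →ₗ[S] Y) : φ.corner X →ₗ[R] φ.corner Y where
  toFun x := ⟨f x, by rw [mem_corner, ← map_smul, x.2]⟩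
  map_add' x y := Subtype.ext (map_add f _ _)
  map_smul' r x := Subtype.ext (show f (φ r • (x : X)) = φ r • f x from map_smul f _ _)

end Corner

noncomputable def cornerFunctor : ModuleCat.{w} S ⥤ ModuleCat.{w} R where
  obj X := ModuleCat.of R (φ.corner X)
  map f := ModuleCat.ofHom (φ.cornerMap f.hom)

instance : φ.cornerFunctor.Additive where
  map_add := rfl

theorem cornerFunctor_map_exact (T : ShortComplex (ModuleCat.{w} S)) (hT : T.Exact) :
    (T.map φ.cornerFunctor).Exact := by
  rw [ShortComplex.moduleCat_exact_iff] at hT ⊢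
  intro x hx
  obtain ⟨y, hy⟩ := hT x.1 (congrArg Subtype.val hx)
  refine ⟨⟨φ 1 • y, φ.smul_mem_corner 1 y⟩, Subtype.ext ?_⟩
  change T.f (φ 1 • y) = x.1
  rw [map_smul, hy, x.2]

end NonUnitalRingHom

namespace OPE

open NonUnitalRingHom

variable (k : Type) [Field k] (A : Type) [Ring A] [Algebra k A]
  (M : Type) [AddCommGroup M] [Module k M] [Module A M] [IsScalarTower k A M]

theorem mul_def (x y : OPE k A M) :
    x * y = (x.1 * y.1, x.1 • y.2.1 + y.2.2 • x.2.1, x.2.2 * y.2.2) := rfl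

def ofA : A →ₙ+* OPE k A M where
  toFun a := (a, 0, 0)
  map_mul' a b := by simp [mul_def]
  map_zero' := rfl
  map_add' a b := by simp

def ofk : k →ₙ+* OPE k A M where
  toFun c := (0, 0, c)
  map_mul' a b := by simp [mul_def]
  map_zero' := rfl
  map_add' a b := by simp

variable {k A M}

@[simp] theorem ofA_apply (a : A) : ofA k A M a = (a, 0, 0) := rfl
@[simp] theorem ofk_apply (c : k) : ofk k A M c = (0, 0, c) := rfl

theorem ofA_one_add_ofk_one : ofA k A M 1 + ofk k A M 1 = 1 := by simp; rfl

theorem ofA_one_mul_ofk_one : ofA k A M 1 * ofk k A M 1 = 0 := by simp [mul_def]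

theorem ofk_one_mul_ofA_one : ofk k A M 1 * ofA k A M 1 = 0 := by simp [mul_def]

section Decomposition

variable (X : ModuleCat (OPE k A M))

theorem smul_mem_corner_ofA (m : M) (x : X) :
    ((0, m, 0) : OPE k A M) • x ∈ (ofA k A M).corner X := by
  rw [mem_corner, ← mul_smul]; simp [mul_def]

def structureMap : M ⊗[k] (ofk k A M).corner X →ₗ[A] (ofA k A M).corner X where
  toFun := TensorProduct.liftAddHom
    (AddMonoidHom.mk' (fun m => AddMonoidHom.mk'
      (fun v : (ofk k A M).corner X => (⟨_, smul_mem_corner_ofA X m v⟩ : (ofA k A M).corner X))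
      (fun v w => Subtype.ext (smul_add _ _ _)))
      (fun m m' => by ext v; simp [← add_smul]))
    (fun c m v => Subtype.ext (by
      change ((0, c • m, 0) : OPE k A M) • (v : X)
        = ((0, m, 0) : OPE k A M) • ofk k A M c • (v : X)
      rw [← mul_smul]; simp [mul_def]))
  map_add' := map_add _
  map_smul' a t := by
    induction t using TensorProduct.induction_on with
    | zero => simp
    | tmul m v =>
      refine Subtype.ext ?_
      change ((0, a • m, 0) : OPE k A M) • (v : X)
        = ofA k A M a • ((0, m, 0) : OPE k A M) • (v : X)
      rw [← mul_smul]; simp [mul_def]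
    | add s t hs ht => simp only [smul_add, map_add, hs, ht]

def decomposition : X ≃ₗ[OPE k A M] Trip k A M (ModuleCat.of A ((ofA k A M).corner X))
    (ModuleCat.of k ((ofk k A M).corner X)) (structureMap X) where
  toFun x := (⟨_, (ofA k A M).smul_mem_corner 1 x⟩, ⟨_, (ofk k A M).smul_mem_corner 1 x⟩)
  invFun p := (p.1 : X) + p.2
  left_inv x := by
    change ofA k A M 1 • x + ofk k A M 1 • x = x
    rw [← add_smul, ofA_one_add_ofk_one, one_smul]
  right_inv p := by
    obtain ⟨⟨n, hn⟩, ⟨v, hv⟩⟩ := p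
    refine Prod.ext (Subtype.ext ?_) (Subtype.ext ?_)
    · change ofA k A M 1 • (n + v) = n
      rw [smul_add, hn, ← hv, ← mul_smul, ofA_one_mul_ofk_one, zero_smul, add_zero]
    · change ofk k A M 1 • (n + v) = v
      rw [smul_add, hv, ← hn, ← mul_smul, ofk_one_mul_ofA_one, zero_smul, zero_add]
  map_add' x y := Prod.ext (Subtype.ext (smul_add _ _ _)) (Subtype.ext (smul_add _ _ _))
  map_smul' b x := by
    refine Prod.ext (Subtype.ext ?_) (Subtype.ext ?_)
    · change ofA k A M 1 • b • x
        = ofA k A M b.1 • ofA k A M 1 • x + ((0, b.2.1, 0) : OPE k A M) • ofk k A M 1 • x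
      rw [← mul_smul, ← mul_smul, ← mul_smul, ← add_smul]
      congr 1
      simp [mul_def]
    · change ofk k A M 1 • b • x = ofk k A M b.2.2 • ofk k A M 1 • x
      rw [← mul_smul, ← mul_smul]
      congr 1
      simp [mul_def]

end Decomposition

section Triples

variable {N : ModuleCat A} {V : ModuleCat k} {f : M ⊗[k] V →ₗ[A] N}

def cornerTripEquiv : (ofA k A M).corner (Trip k A M N V f) ≃ₗ[A] N where
  toFun p := p.1.1
  invFun n := ⟨(n, 0), mem_corner.2 <| Prod.ext
    (show (1 : A) • n + f ((0 : M) ⊗ₜ 0) = n by simp)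
    (show (0 : k) • (0 : V) = 0 from smul_zero _)⟩
  left_inv p := by
    have hp := mem_corner.1 p.2
    have hv : (0 : k) • p.1.2 = p.1.2 := congrArg Prod.snd hp
    rw [zero_smul] at hv
    exact Subtype.ext (Prod.ext rfl hv)
  right_inv _ := rfl
  map_add' _ _ := rfl
  map_smul' a p := by
    change a • p.1.1 + f ((0 : M) ⊗ₜ p.1.2) = a • p.1.1
    simp

def tripEquivOfSubsingleton [Subsingleton N] :
    Trip k A M N V f ≃ₗ[OPE k A M] (G k A M).obj V where
  toFun p := p.2
  invFun v := (0, v)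
  left_inv _ := Prod.ext (Subsingleton.elim _ _) rfl
  right_inv _ := rfl
  map_add' _ _ := rfl
  map_smul' _ _ := rfl

theorem subsingleton_corner_G : Subsingleton ((ofA k A M).corner ((G k A M).obj V)) := by
  have h (x : (ofA k A M).corner ((G k A M).obj V)) : (x : (G k A M).obj V) = 0 :=
    x.2.symm.trans (zero_smul k (show V from x.1))
  exact ⟨fun x y => Subtype.ext ((h x).trans (h y).symm)⟩

end Triples

theorem corner_mem_union_isZero_iff {T : Set (ModuleCat A)} (hT : IsoClosed T)
    (X : ModuleCat (OPE k A M)) :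
    (ofA k A M).cornerFunctor.obj X ∈ T ∪ {Y | IsZero Y} ↔
      (∃ N ∈ T, ∃ (V : ModuleCat k) (f : M ⊗[k] V →ₗ[A] N), Nonempty (X ≅ Trip k A M N V f)) ∨
        ∃ V : ModuleCat k, Nonempty (X ≅ (G k A M).obj V) := by
  constructor
  · rintro (h | h)
    · exact Or.inl ⟨ModuleCat.of A ((ofA k A M).corner X), h,
        ModuleCat.of k ((ofk k A M).corner X), structureMap X, ⟨(decomposition X).toModuleIso⟩⟩
    · have : Subsingleton ((ofA k A M).corner X) := ModuleCat.subsingleton_of_isZero h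
      exact Or.inr ⟨ModuleCat.of k ((ofk k A M).corner X),
        ⟨((decomposition X).trans tripEquivOfSubsingleton).toModuleIso⟩⟩
  · rintro (⟨N, hN, V, f, ⟨e⟩⟩ | ⟨V, ⟨e⟩⟩)
    · exact Or.inl
        (hT ((ofA k A M).cornerFunctor.mapIso e ≪≫ cornerTripEquiv.toModuleIso).symm hN)
    · have : Subsingleton ((ofA k A M).cornerFunctor.obj ((G k A M).obj V)) :=
        subsingleton_corner_G
      exact Or.inr ((ModuleCat.isZero_of_subsingleton _).of_iso
        ((ofA k A M).cornerFunctor.mapIso e))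

end OPE

/-- Theorem 3.1(2): if `T_A` is an ICE-closed subcategory of `mod A`, then the subcategory
of `mod B` consisting of all triples `(N, V, f)` with `N ∈ T_A` together with all triples
`(0, V, 0)` is ICE-closed, where `B` is the one-point extension of `A` by `M`. -/
theorem ICEClosed_extend_full (k : Type) [Field k] (A : Type) [Ring A] [Algebra k A]
    (M : Type) [AddCommGroup M] [Module k M] [Module A M] [IsScalarTower k A M]
    (T_A : Set (ModuleCat A)) (hT : IsICEClosed T_A) :
    IsICEClosed {X : ModuleCat (OPE k A M) |
      (∃ N ∈ T_A, ∃ (V : ModuleCat k) (f : M ⊗[k] V →ₗ[A] N),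
        Nonempty (X ≅ OPE.Trip k A M N V f)) ∨
      (∃ V : ModuleCat k, Nonempty (X ≅ (OPE.G k A M).obj V))} := by
  convert hT.union_isZero.preimage_of_map_exact (OPE.ofA k A M).cornerFunctor
    (OPE.ofA k A M).cornerFunctor_map_exact using 1
  ext X
  exact (OPE.corner_mem_union_isZero_iff hT.1 X).symm
end

section
/- Let B be the one-point extension of A by M. If S_A is an epibrick in mod A, then S'_B = { (s, 0, 0) | s ∈ S_A } ∪ { (0, k, 0) } is an epibrick in mod B. -/
open CategoryTheory Limits TensorProduct

open CategoryTheory Limits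

section BrickDefs
variable {R : Type} [Ring R]

/-- A brick: a nonzero module all of whose nonzero endomorphisms are invertible,
i.e. its endomorphism ring is a division ring. -/
def IsBrick (X : ModuleCat R) : Prop :=
  (¬ IsZero X) ∧ ∀ f : X ⟶ X, f = 0 ∨ IsIso f

/-- A semibrick: a set of bricks such that every morphism between its elements is
zero or an isomorphism. -/
def IsSemibrick (S : Set (ModuleCat R)) : Prop :=
  (∀ X ∈ S, IsBrick X) ∧ ∀ X ∈ S, ∀ Y ∈ S, ∀ f : X ⟶ Y, f = 0 ∨ IsIso f

/-- A monobrick: a set of bricks such that every morphism between its elements is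
zero or injective. -/
def IsMonobrick (S : Set (ModuleCat R)) : Prop :=
  (∀ X ∈ S, IsBrick X) ∧ ∀ X ∈ S, ∀ Y ∈ S, ∀ f : X ⟶ Y, f = 0 ∨ Function.Injective f

/-- An epibrick: a set of bricks such that every morphism between its elements is
zero or surjective. -/
def IsEpibrick (S : Set (ModuleCat R)) : Prop :=
  (∀ X ∈ S, IsBrick X) ∧ ∀ X ∈ S, ∀ Y ∈ S, ∀ f : X ⟶ Y, f = 0 ∨ Function.Surjective f

end BrickDefs

/-!
Both embeddings `N ↦ (N, 0, 0)` and `V ↦ (0, V, 0)` are restrictions of scalars along surjective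
ring maps `B → A` and `B → k`, hence fully faithful, so they carry epibricks to epibricks, and `{k}`
is an epibrick by Schur's lemma. No nonzero map runs between the two images in either direction,
since the idempotent `(1, 0, 0)` of `B` acts as the identity on the first and as zero on the second
(and `(0, 0, 1)` the other way round), so their union is again an epibrick.
-/

namespace ModuleCat

variable {R S : Type} [Ring R] [Ring S] {f : R →+* S}

theorem full_restrictScalars_of_surjective (hf : Function.Surjective f) :
    (restrictScalars f).Full where
  map_surjective {X Y} φ := ⟨ofHom
    { toFun := φ
      map_add' := φ.hom.map_add
      map_smul' := fun s x => by
        obtain ⟨r, rfl⟩ := hf s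
        exact φ.hom.map_smul r x }, rfl⟩

theorem isBrick_restrictScalars (hf : Function.Surjective f) {X : ModuleCat S}
    (hX : IsBrick X) : IsBrick ((restrictScalars f).obj X) := by
  have := full_restrictScalars_of_surjective hf
  refine ⟨fun h => hX.1 ?_, fun φ => ?_⟩
  · rw [isZero_iff_subsingleton] at h ⊢
    exact h
  · obtain ⟨ψ, rfl⟩ := (restrictScalars f).map_surjective φ
    rcases hX.2 ψ with rfl | hψ
    · exact Or.inl (Functor.map_zero _ _ _)
    · exact Or.inr inferInstance

theorem isEpibrick_image_restrictScalars (hf : Function.Surjective f) {S' : Set (ModuleCat S)}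
    (hS : IsEpibrick S') : IsEpibrick ((restrictScalars f).obj '' S') := by
  have := full_restrictScalars_of_surjective hf
  refine ⟨?_, ?_⟩
  · rintro _ ⟨X, hX, rfl⟩
    exact isBrick_restrictScalars hf (hS.1 X hX)
  · rintro _ ⟨X, hX, rfl⟩ _ ⟨Y, hY, rfl⟩ φ
    obtain ⟨ψ, rfl⟩ := (restrictScalars f).map_surjective φ
    rcases hS.2 X hX Y hY ψ with rfl | hψ
    · exact Or.inl (Functor.map_zero _ _ _)
    · exact Or.inr hψ

theorem hom_eq_zero_of_smul {X Y : ModuleCat R} (e : R) (hX : ∀ x : X, e • x = x)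
    (hY : ∀ y : Y, e • y = 0) (φ : X ⟶ Y) : φ = 0 := by
  ext x
  rw [← hX x, map_smul, hY]
  rfl

theorem isBrick_self (K : Type) [DivisionRing K] : IsBrick (of K K) := by
  refine ⟨fun h => ?_, fun φ => ?_⟩
  · rw [isZero_of_iff_subsingleton] at h
    exact not_subsingleton K h
  · rcases LinearMap.bijective_or_eq_zero φ.hom with hφ | hφ
    · exact Or.inr ((ConcreteCategory.isIso_iff_bijective φ).2 hφ)
    · exact Or.inl (hom_ext hφ)

end ModuleCat

theorem IsBrick.isEpibrick_singleton {R : Type} [Ring R] {X : ModuleCat R} (hX : IsBrick X) :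
    IsEpibrick {X} := by
  refine ⟨fun Y hY => hY ▸ hX, ?_⟩
  rintro _ rfl _ rfl φ
  rcases hX.2 φ with hφ | hφ
  · exact Or.inl hφ
  · exact Or.inr ((ConcreteCategory.isIso_iff_bijective φ).1 hφ).2

theorem IsEpibrick.union {R : Type} [Ring R] {S T : Set (ModuleCat R)} (hS : IsEpibrick S)
    (hT : IsEpibrick T) (hST : ∀ X ∈ S, ∀ Y ∈ T, ∀ f : X ⟶ Y, f = 0)
    (hTS : ∀ X ∈ T, ∀ Y ∈ S, ∀ f : X ⟶ Y, f = 0) : IsEpibrick (S ∪ T) := by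
  refine ⟨fun X hX => hX.elim (hS.1 X) (hT.1 X), ?_⟩
  rintro X (hX | hX) Y (hY | hY) f
  · exact hS.2 X hX Y hY f
  · exact Or.inl (hST X hX Y hY f)
  · exact Or.inl (hTS X hX Y hY f)
  · exact hT.2 X hX Y hY f

namespace OPE

variable (k : Type) [Field k] (A : Type) [Ring A] [Algebra k A]
  (M : Type) [AddCommGroup M] [Module k M] [Module A M] [IsScalarTower k A M]

theorem toA_surjective : Function.Surjective (OPE.toA k A M) :=
  fun a => ⟨(a, 0, 0), rfl⟩

theorem tok_surjective : Function.Surjective (OPE.tok k A M) :=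
  fun c => ⟨(0, 0, c), rfl⟩

theorem hom_F_G_eq_zero {N : ModuleCat A} {V : ModuleCat k}
    (φ : (OPE.F k A M).obj N ⟶ (OPE.G k A M).obj V) : φ = 0 :=
  ModuleCat.hom_eq_zero_of_smul ((1, 0, 0) : OPE k A M) (fun x => one_smul A (show N from x))
    (fun y => zero_smul k (show V from y)) φ

theorem hom_G_F_eq_zero {N : ModuleCat A} {V : ModuleCat k}
    (φ : (OPE.G k A M).obj V ⟶ (OPE.F k A M).obj N) : φ = 0 :=
  ModuleCat.hom_eq_zero_of_smul ((0, 0, 1) : OPE k A M) (fun x => one_smul k (show V from x))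
    (fun y => zero_smul A (show N from y)) φ

end OPE

/-- Theorem 3.5(2): if `S_A` is an epibrick in `mod A`, then
`S'_B = { (s,0,0) | s ∈ S_A } ∪ { (0,k,0) }` is an epibrick in `mod B`. -/
theorem epibrick_extend_simple (k : Type) [Field k] (A : Type) [Ring A] [Algebra k A]
    (M : Type) [AddCommGroup M] [Module k M] [Module A M] [IsScalarTower k A M]
    (S_A : Set (ModuleCat A)) (hS : IsEpibrick S_A) :
    IsEpibrick ((OPE.F k A M).obj '' S_A ∪ {(OPE.G k A M).obj (ModuleCat.of k k)}) := by
  have hF : IsEpibrick ((OPE.F k A M).obj '' S_A) :=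
    ModuleCat.isEpibrick_image_restrictScalars (OPE.toA_surjective k A M) hS
  have hG : IsEpibrick {(OPE.G k A M).obj (ModuleCat.of k k)} :=
    (ModuleCat.isBrick_restrictScalars (OPE.tok_surjective k A M)
      (ModuleCat.isBrick_self k)).isEpibrick_singleton
  refine hF.union hG ?_ ?_
  · rintro _ ⟨N, -, rfl⟩ _ rfl φ
    exact OPE.hom_F_G_eq_zero k A M φ
  · rintro _ rfl _ ⟨N, -, rfl⟩ φ
    exact OPE.hom_G_F_eq_zero k A M φ
end
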